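/- Let C be a planar convex body that is k_C-rotationally symmetric about a point p in its interior, where k_C is a composite integer whose smallest divisor greater than 1 equals 5 (so C is multi-rotationally symmetric with minimal degree 5). Then d_M(P_5) ≠ R, i.e. diam(C ∩ S_5) ≠ R; equivalently, R < 2 r sin(π/5). -/

import Mathlib

open Metric Set

/-- Rotation of angle `α` about the point `p` in the plane `ℂ`. -/
noncomputable def rot (p : ℂ) (α : ℝ) : ℂ → ℂ :=
  fun z => p + Complex.exp (α * Complex.I) * (z - p)

/-- A planar convex body: a compact convex subset of the plane with nonempty interior. -/
def IsConvexBody (C : Set ℂ) : Prop :=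
  IsCompact C ∧ Convex ℝ C ∧ (interior C).Nonempty

/-- `C` is `k`-rotationally symmetric about `p`: the rotation of angle `2π/k`
about `p` maps `C` onto itself. -/
def IsRotSym (C : Set ℂ) (p : ℂ) (k : ℕ) : Prop :=
  rot p (2 * Real.pi / k) '' C = C

/-- The closed convex sector at `p` spanned by `x - p` and `ρ_k(x) - p`. -/
noncomputable def sector (p x : ℂ) (k : ℕ) : Set ℂ :=
  {z | ∃ a b : ℝ, 0 ≤ a ∧ 0 ≤ b ∧
    z = p + (a : ℂ) * (x - p) + (b : ℂ) * (rot p (2 * Real.pi / k) x - p)}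

/-- The maximum relative diameter of the standard `k`-partition of `C`
(with center `p` and endpoint `x`): the diameter of one piece `C ∩ S_k`. -/
noncomputable def dM (C : Set ℂ) (p x : ℂ) (k : ℕ) : ℝ :=
  Metric.diam (C ∩ sector p x k)

/-- The circumradius of `C` with respect to `p`: `sup_{y ∈ C} dist p y`. -/
noncomputable def circumrad (C : Set ℂ) (p : ℂ) : ℝ :=
  ⨆ y ∈ C, dist p y

/-!
Let `θ = 2π/k_C`; since `k_C` is composite with least prime factor `5`, `k_C ≥ 25`. A supporting
line of `C` at `x` has a normal `w`, and every `y ∈ C` can be rotated by a multiple of `θ` so that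
`y - p` makes an angle at most `θ` with `w`. Comparing with the support inequality at `x` gives
`dist p y * cos θ ≤ r`, hence `R ≤ r / cos θ < 2 r sin (π/5)`. On the other hand `5 ∣ k_C`, so
`C` is `5`-rotationally symmetric and the piece `C ∩ S_5` contains the chord from `x` to its
rotate by `2π/5`, of length `2 r sin (π/5)`.
-/

lemma rot_rot (p : ℂ) (α β : ℝ) (z : ℂ) : rot p α (rot p β z) = rot p (α + β) z := by
  simp only [rot, add_sub_cancel_left, ← mul_assoc, ← Complex.exp_add]
  push_cast
  ring_nf

lemma rot_zero (p : ℂ) : rot p 0 = id := by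
  ext1 z
  simp [rot]

lemma iterate_rot (p : ℂ) (α : ℝ) (n : ℕ) : (rot p α)^[n] = rot p (n * α) := by
  induction n with
  | zero => simp [rot_zero]
  | succ n ih =>
    ext1 z
    rw [Function.iterate_succ_apply', ih, rot_rot]
    push_cast
    ring_nf

lemma dist_rot_self (p : ℂ) (α : ℝ) (z : ℂ) :
    dist z (rot p α z) = 2 * |Real.sin (α / 2)| * dist p z := by
  have h : z - rot p α z = -((Complex.exp (Complex.I * α) - 1) * (z - p)) := by
    simp only [rot, mul_comm (α : ℂ) Complex.I]
    ring
  rw [Complex.dist_eq, h, norm_neg, norm_mul, Complex.norm_exp_I_mul_ofReal_sub_one,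
    dist_comm, Complex.dist_eq, norm_mul, Real.norm_two, Real.norm_eq_abs]

namespace IsRotSym

variable {C : Set ℂ} {p : ℂ} {k : ℕ}

lemma image_rot_nat_mul (h : IsRotSym C p k) (n : ℕ) :
    rot p (n * (2 * Real.pi / k)) '' C = C := by
  rw [← iterate_rot, Set.image_iterate_eq]
  exact Function.iterate_fixed h n

lemma rot_nat_mul_mem (h : IsRotSym C p k) (n : ℕ) {z : ℂ} (hz : z ∈ C) :
    rot p (n * (2 * Real.pi / k)) z ∈ C :=
  h.image_rot_nat_mul n ▸ mem_image_of_mem _ hz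

lemma of_dvd (h : IsRotSym C p k) (hk : k ≠ 0) {d : ℕ} (hd : d ∣ k) : IsRotSym C p d := by
  obtain ⟨m, rfl⟩ := hd
  have hdm : (d : ℝ) ≠ 0 ∧ (m : ℝ) ≠ 0 := by exact_mod_cast mul_ne_zero_iff.1 hk
  have hangle : 2 * Real.pi / d = m * (2 * Real.pi / (d * m : ℕ)) := by
    push_cast
    field_simp [hdm.1, hdm.2]
  rw [IsRotSym, hangle]
  exact h.image_rot_nat_mul m

end IsRotSym

lemma exists_nat_cos_mul_norm_le_re {θ : ℝ} (hθ0 : 0 < θ) (hθ : θ ≤ Real.pi) (v : ℂ) :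
    ∃ n : ℕ, Real.cos θ * ‖v‖ ≤ (Complex.exp ((n * θ : ℝ) * Complex.I) * v).re := by
  set φ := Complex.arg v
  have hφ : 0 ≤ (2 * Real.pi - φ) / θ :=
    div_nonneg (by linarith [Complex.arg_le_pi v, Real.pi_pos]) hθ0.le
  set n := ⌈(2 * Real.pi - φ) / θ⌉₊
  -- the angle of the rotated vector, reduced to `[0, θ)`
  set ψ := n * θ + φ - 2 * Real.pi
  have hψ0 : 0 ≤ ψ := by
    have := (div_le_iff₀ hθ0).1 (Nat.le_ceil ((2 * Real.pi - φ) / θ))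
    linarith
  have hψθ : ψ ≤ θ := by
    have := (lt_div_iff₀ hθ0).1 (sub_lt_iff_lt_add.2 (Nat.ceil_lt_add_one hφ))
    linarith
  have hre : (Complex.exp ((n * θ : ℝ) * Complex.I) * v).re = ‖v‖ * Real.cos ψ := by
    conv_lhs => rw [← Complex.norm_mul_exp_arg_mul_I v]
    rw [mul_left_comm, ← Complex.exp_add, ← add_mul, ← Complex.ofReal_add,
      Complex.re_ofReal_mul, Complex.exp_ofReal_mul_I_re, ← Real.cos_sub_two_pi]
  refine ⟨n, ?_⟩
  rw [hre, mul_comm]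
  exact mul_le_mul_of_nonneg_left (Real.cos_le_cos_of_nonneg_of_le_pi hψ0 hθ hψθ) (norm_nonneg v)

lemma exists_inner_le_inner_of_notMem_interior {E : Type*} [NormedAddCommGroup E]
    [InnerProductSpace ℝ E] [CompleteSpace E] {A : Set E} (hA : Convex ℝ A)
    (hAint : (interior A).Nonempty) {x : E} (hx : x ∉ interior A) :
    ∃ w : E, w ≠ 0 ∧ ∀ a ∈ A, inner ℝ w a ≤ inner ℝ w x := by
  obtain ⟨f, hf, hfA⟩ := geometric_hahn_banach_of_nonempty_interior_point hA hx hAint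
  refine ⟨(InnerProductSpace.toDual ℝ E).symm f, by simpa using hf, fun a ha => ?_⟩
  simpa only [InnerProductSpace.toDual_symm_apply] using hfA a ha

lemma IsRotSym.dist_mul_cos_le {C : Set ℂ} {p x y : ℂ} {k : ℕ} (hk : 2 ≤ k)
    (hsym : IsRotSym C p k) (hconv : Convex ℝ C) (hint : (interior C).Nonempty)
    (hx : x ∉ interior C) (hy : y ∈ C) :
    dist p y * Real.cos (2 * Real.pi / k) ≤ dist p x := by
  set θ := 2 * Real.pi / k
  have hθ0 : 0 < θ := by positivity
  have hθ : θ ≤ Real.pi := by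
    rw [div_le_iff₀ (by positivity), mul_comm Real.pi]
    exact mul_le_mul_of_nonneg_right (by exact_mod_cast hk : (2 : ℝ) ≤ k) Real.pi_pos.le
  obtain ⟨w, hw, hsupp⟩ := exists_inner_le_inner_of_notMem_interior hconv hint hx
  obtain ⟨n, hn⟩ := exists_nat_cos_mul_norm_le_re hθ0 hθ ((y - p) * (starRingEnd ℂ) w)
  have hinner : ∀ z, inner ℝ w (z - p) = ((z - p) * (starRingEnd ℂ) w).re := fun z =>
    Complex.inner w (z - p)
  have key : ‖w‖ * (dist p y * Real.cos θ) ≤ ‖w‖ * dist p x := by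
    calc ‖w‖ * (dist p y * Real.cos θ)
        = Real.cos θ * ‖(y - p) * (starRingEnd ℂ) w‖ := by
          rw [norm_mul, Complex.norm_conj, dist_comm, Complex.dist_eq]
          ring
      _ ≤ inner ℝ w (rot p (n * θ) y - p) := by
          rw [hinner]
          convert hn using 2
          simp only [rot, add_sub_cancel_left]
          push_cast
          ring
      _ ≤ inner ℝ w (x - p) := by
          rw [inner_sub_right, inner_sub_right]
          linarith [hsupp _ (hsym.rot_nat_mul_mem n hy)]
      _ ≤ ‖w‖ * dist p x := by
          rw [dist_comm, dist_eq_norm]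
          exact real_inner_le_norm w (x - p)
  exact le_of_mul_le_mul_left key (norm_pos_iff.2 hw)

lemma circumrad_le {C : Set ℂ} {p : ℂ} {b : ℝ} (hb : 0 ≤ b) (h : ∀ y ∈ C, dist p y ≤ b) :
    circumrad C p ≤ b :=
  Real.iSup_le (fun y => Real.iSup_le (h y) hb) hb

lemma mem_sector_self (p x : ℂ) (k : ℕ) : x ∈ sector p x k :=
  ⟨1, 0, zero_le_one, le_rfl, by simp⟩

lemma rot_mem_sector (p x : ℂ) (k : ℕ) : rot p (2 * Real.pi / k) x ∈ sector p x k :=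
  ⟨0, 1, le_rfl, zero_le_one, by simp⟩

lemma IsRotSym.dist_rot_le_dM {C : Set ℂ} {p x : ℂ} {k : ℕ} (hsym : IsRotSym C p k)
    (hC : Bornology.IsBounded C) (hx : x ∈ C) :
    dist x (rot p (2 * Real.pi / k) x) ≤ dM C p x k :=
  dist_le_diam_of_mem (hC.subset inter_subset_left) ⟨hx, mem_sector_self p x k⟩
    ⟨hsym ▸ mem_image_of_mem _ hx, rot_mem_sector p x k⟩

lemma one_lt_two_mul_sin_pi_div_five_mul_cos {θ : ℝ} (hθ0 : 0 ≤ θ) (hθ : θ ≤ 2 * Real.pi / 25) :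
    1 < 2 * Real.sin (Real.pi / 5) * Real.cos θ := by
  have hpi := Real.pi_gt_d2
  have hpi' := Real.pi_lt_d2
  have hsin : 0.58 < Real.sin (Real.pi / 5) := by
    have hcube : (Real.pi / 5) ^ 3 ≤ 0.63 ^ 3 :=
      pow_le_pow_left₀ (by positivity) (by linarith) 3
    linarith [Real.sin_gt_sub_cube (x := Real.pi / 5) (by positivity)]
  have hcos : 0.968 ≤ Real.cos θ := by
    have hsq : θ ^ 2 ≤ 0.252 ^ 2 := pow_le_pow_left₀ hθ0 (by linarith) 2
    linarith [Real.one_sub_sq_div_two_le_cos (x := θ)]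
  nlinarith

/-- For a multi-rotationally symmetric planar convex body whose minimal degree
(the smallest divisor of the composite maximal degree `k_C` greater than 1)
equals `5`, one has `d_M(P_5) ≠ R`; equivalently `R < 2 r sin(π/5)`. -/
theorem stmt_9 (C : Set ℂ) (p x : ℂ) (kC : ℕ) (hC : IsConvexBody C)
    (hk2 : 2 ≤ kC) (hcomp : ¬ kC.Prime) (hmin : kC.minFac = 5)
    (hsym : IsRotSym C p kC) (hp : p ∈ interior C)
    (hx : x ∈ frontier C) (hxr : dist p x = infDist p (frontier C)) :
    dM C p x 5 ≠ circumrad C p ∧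
      circumrad C p < 2 * infDist p (frontier C) * Real.sin (Real.pi / 5) := by
  obtain ⟨hcpt, hconv, hint⟩ := hC
  have hxC : x ∈ C := hcpt.isClosed.closure_subset hx.1
  have hr : 0 < dist p x := dist_pos.2 (ne_of_mem_of_not_mem hp hx.2)
  have hk25 : 25 ≤ kC := by
    have := Nat.minFac_sq_le_self (Nat.pos_of_ne_zero fun h => by simp [h] at hmin) hcomp
    rwa [hmin] at this
  set θ := 2 * Real.pi / kC
  have hθ : θ ≤ 2 * Real.pi / 25 :=
    div_le_div_of_nonneg_left (by positivity) (by norm_num) (by exact_mod_cast hk25)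
  have hθ0 : 0 ≤ θ := by positivity
  have hcos := one_lt_two_mul_sin_pi_div_five_mul_cos hθ0 hθ
  have hcos0 : 0 < Real.cos θ :=
    Real.cos_pos_of_mem_Ioo ⟨by linarith [Real.pi_pos], by linarith [Real.pi_pos]⟩
  have hR : circumrad C p < 2 * dist p x * Real.sin (Real.pi / 5) := by
    calc circumrad C p ≤ dist p x / Real.cos θ := circumrad_le (by positivity) fun y hy =>
          (le_div_iff₀ hcos0).2 (hsym.dist_mul_cos_le hk2 hconv hint hx.2 hy)
      _ < 2 * dist p x * Real.sin (Real.pi / 5) := by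
          rw [div_lt_iff₀ hcos0]
          nlinarith
  have hdM : 2 * dist p x * Real.sin (Real.pi / 5) ≤ dM C p x 5 := by
    have h5 := (hsym.of_dvd (by omega) (hmin ▸ Nat.minFac_dvd kC)).dist_rot_le_dM
      hcpt.isBounded hxC
    rwa [dist_rot_self, Nat.cast_ofNat, show 2 * Real.pi / 5 / 2 = Real.pi / 5 by ring,
      abs_of_nonneg (Real.sin_nonneg_of_nonneg_of_le_pi (by positivity) (by linarith [Real.pi_pos])),
      mul_right_comm] at h5
  rw [← hxr]
  exact ⟨(hR.trans_le hdM).ne', hR⟩
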